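/- Let A be a finite left brace such that Inn(A,·) ⊆ Aut(A,+,·), i.e., every multiplicative conjugation preserves addition. Then every Sylow subgroup of (A,+) is a normal subgroup of (A,·), and consequently (A,·) is nilpotent. -/
import Mathlib


/-- A left brace: `(B,+)` abelian group, `(B,·)` group, with
`a * (b + c) + a = a * b + a * c`. -/
class LeftBrace (B : Type*) extends AddCommGroup B, Group B where
  left_compat : ∀ a b c : B, a * (b + c) + a = a * b + a * c

section aux
variable {A : Type*} [LeftBrace A]

lemma LB.mul_zero (a : A) : a * 0 = a := by
  have h := LeftBrace.left_compat a 0 0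
  rw [add_zero] at h
  exact (add_left_cancel h).symm

lemma LB.one_eq_zero : (1 : A) = 0 := by
  have := LB.mul_zero (1 : A); rw [one_mul] at this; exact this.symm

/-- The lambda map `b ↦ a * b - a` as an additive hom. -/
def LB.lam (a : A) : A →+ A where
  toFun b := a * b - a
  map_zero' := by show a * 0 - a = 0; rw [LB.mul_zero, sub_self]
  map_add' b c := by
    show a * (b + c) - a = (a * b - a) + (a * c - a)
    have h := LeftBrace.left_compat a b c
    have h2 : a * (b + c) = a * b + a * c - a := by rw [← h]; abel
    rw [h2]; abel

lemma LB.mul_eq (a b : A) : a * b = LB.lam a b + a := by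
  show a * b = (a * b - a) + a; abel

end aux

/-- Let `A` be a finite left brace such that every multiplicative conjugation
preserves addition (`Inn(A,·) ⊆ Aut(A,+,·)`). Then for every prime `p` the
Sylow `p`-subgroup of `(A,+)` (the `p`-torsion part) is a normal subgroup of
the multiplicative group `(A,·)`, and consequently `(A,·)` is nilpotent. -/
theorem stmt15 {A : Type*} [LeftBrace A] [Finite A]
    (hinn : ∀ g a b : A, g * (a + b) * g⁻¹ = g * a * g⁻¹ + g * b * g⁻¹) :
    (∀ p : ℕ, p.Prime →
      ∃ H : Subgroup A,
        (H : Set A) = {a : A | ∃ n : ℕ, p ^ n • a = 0} ∧ H.Normal) ∧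
    Group.IsNilpotent A := by
  classical
  -- conjugation as an additive hom
  have conj0 : ∀ g : A, g * 0 * g⁻¹ = 0 := fun g => by
    rw [LB.mul_zero, mul_inv_cancel, LB.one_eq_zero]
  let conj : A → A →+ A := fun g =>
    { toFun := fun a => g * a * g⁻¹
      map_zero' := conj0 g
      map_add' := hinn g }
  -- monotonicity of torsion exponent
  have hmono : ∀ (p : ℕ) (a : A) (n m : ℕ), n ≤ m → p ^ n • a = 0 → p ^ m • a = 0 := by
    intro p a n m h hn
    rw [← Nat.sub_add_cancel h, pow_add, mul_smul, hn, smul_zero]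
  -- closure of the torsion set under addition
  have hadd : ∀ (p : ℕ) (a b : A), (∃ n, p ^ n • a = 0) → (∃ n, p ^ n • b = 0) →
      ∃ n, p ^ n • (a + b) = 0 := by
    rintro p a b ⟨n, hn⟩ ⟨m, hm⟩
    refine ⟨max n m, ?_⟩
    rw [smul_add, hmono p a n _ (le_max_left n m) hn, hmono p b m _ (le_max_right n m) hm,
      add_zero]
  -- the subgroup construction, with the extra additive data
  have key : ∀ p : ℕ, p.Prime →
      ∃ H : Subgroup A,
        (H : Set A) = {a : A | ∃ n : ℕ, p ^ n • a = 0} ∧ H.Normal := by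
    intro p _hp
    refine ⟨{ carrier := {a : A | ∃ n : ℕ, p ^ n • a = 0}
              one_mem' := ⟨0, by rw [LB.one_eq_zero]; simp⟩
              mul_mem' := ?_
              inv_mem' := ?_ }, rfl, ?_⟩
    · rintro a b ⟨n, hn⟩ ⟨m, hm⟩
      show ∃ k, p ^ k • (a * b) = 0
      have hl : p ^ m • LB.lam a b = 0 := by
        rw [← map_nsmul, hm, map_zero]
      rw [LB.mul_eq]
      exact hadd p _ _ ⟨m, hl⟩ ⟨n, hn⟩
    · rintro a ⟨n, hn⟩
      show ∃ k, p ^ k • a⁻¹ = 0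
      have hlam : LB.lam a⁻¹ a = -a⁻¹ := by
        show a⁻¹ * a - a⁻¹ = -a⁻¹
        rw [inv_mul_cancel, LB.one_eq_zero, zero_sub]
      have h2 : p ^ n • LB.lam a⁻¹ a = 0 := by
        rw [← map_nsmul, hn, map_zero]
      refine ⟨n, ?_⟩
      rw [show a⁻¹ = -(LB.lam a⁻¹ a) by rw [hlam, neg_neg], smul_neg, h2, neg_zero]
    · constructor
      rintro x ⟨n, hn⟩ g
      refine ⟨n, ?_⟩
      show p ^ n • (g * x * g⁻¹) = 0
      have : (conj g) (p ^ n • x) = p ^ n • (conj g) x := map_nsmul _ _ _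
      rw [hn, map_zero] at this
      exact this.symm
  refine ⟨key, ?_⟩
  -- nilpotency: all Sylow subgroups are normal
  have h4 : ∀ (p : ℕ) (_hp : Fact p.Prime) (P : Sylow p A), (↑P : Subgroup A).Normal := by
    intro p hp P
    obtain ⟨H, hHc, hHn⟩ := key p hp.out
    -- the corresponding additive subgroup
    let Hadd : AddSubgroup A :=
      { carrier := {a : A | ∃ n : ℕ, p ^ n • a = 0}
        zero_mem' := ⟨0, by simp⟩
        add_mem' := fun {a b} ha hb => hadd p a b ha hb
        neg_mem' := fun {a} ha => ha.imp fun n hn => by rw [smul_neg, hn, neg_zero] }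
    have hcard : Nat.card H = Nat.card Hadd :=
      Nat.card_congr (Equiv.setCongr (by rw [hHc]; rfl))
    -- Hadd is (multiplicatively, via `Multiplicative`) a p-group
    have hpg : IsPGroup p (Multiplicative Hadd) := by
      intro g
      obtain ⟨n, hn⟩ := (Multiplicative.toAdd g).2
      refine ⟨n, ?_⟩
      apply Multiplicative.toAdd.injective
      rw [toAdd_pow, toAdd_one]
      exact Subtype.ext (by simpa using hn)
    obtain ⟨n, hcard2⟩ := IsPGroup.iff_card.mp hpg
    have hcardH : Nat.card H = p ^ n := by
      rw [hcard, ← hcard2]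
      exact (Nat.card_congr Multiplicative.toAdd).symm
    have hHpg : IsPGroup p H := IsPGroup.of_card hcardH
    -- p does not divide the index of H
    have hindexadd : ¬ p ∣ Hadd.index := by
      intro hdvd
      rw [AddSubgroup.index] at hdvd
      haveI : Fact p.Prime := hp
      haveI : Fintype (A ⧸ Hadd) := Fintype.ofFinite _
      rw [Nat.card_eq_fintype_card] at hdvd
      obtain ⟨x, hx⟩ := exists_prime_addOrderOf_dvd_card (G := A ⧸ Hadd) p hdvd
      induction x using QuotientAddGroup.induction_on with
      | H a =>
        have hpx : p • ((a : A ⧸ Hadd)) = 0 := by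
          rw [← hx]; exact addOrderOf_nsmul_eq_zero _
        have hmem : p • a ∈ Hadd := by
          rwa [← QuotientAddGroup.eq_zero_iff, QuotientAddGroup.mk_nsmul]
        obtain ⟨m, hm⟩ := hmem
        have hamem : a ∈ Hadd := ⟨m + 1, by rw [pow_succ, mul_smul]; exact hm⟩
        have : ((a : A ⧸ Hadd)) = 0 := (QuotientAddGroup.eq_zero_iff a).mpr hamem
        rw [this, addOrderOf_zero] at hx
        exact hp.out.one_lt.ne hx
    have hindex : ¬ p ∣ H.index := by
      have h1 : Nat.card H * H.index = Nat.card A := Subgroup.card_mul_index H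
      have h2 : Nat.card Hadd * Hadd.index = Nat.card A := AddSubgroup.card_mul_index Hadd
      have hpos : Nat.card H ≠ 0 := Nat.card_pos.ne'
      have : H.index = Hadd.index := by
        apply Nat.eq_of_mul_eq_mul_left (Nat.pos_of_ne_zero hpos)
        rw [h1, ← h2, hcard]
      rwa [this]
    -- H is contained in a Sylow subgroup, and equals it
    obtain ⟨Q, hHQ⟩ := hHpg.exists_le_sylow
    haveI : Fact p.Prime := hp
    obtain ⟨m, hcardQ⟩ := IsPGroup.iff_card.mp Q.isPGroup'
    have hdvd1 : Nat.card H ∣ Nat.card Q := Subgroup.card_dvd_of_le hHQ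
    have hdvd2 : Nat.card Q ∣ Nat.card A := Subgroup.card_subgroup_dvd_card (Q : Subgroup A)
    have hcop : Nat.Coprime (p ^ m) H.index :=
      Nat.Coprime.pow_left m (hp.out.coprime_iff_not_dvd.mpr hindex)
    have hdvd3 : Nat.card Q ∣ Nat.card H := by
      rw [hcardQ, hcardH]
      refine hcop.dvd_of_dvd_mul_right ?_
      rw [← hcardH, ← hcardQ, Subgroup.card_mul_index H]
      exact hdvd2
    have hQH : H = (Q : Subgroup A) :=
      Subgroup.eq_of_le_of_card_ge hHQ (Nat.le_of_dvd Nat.card_pos hdvd3)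
    have hQn : (Q : Subgroup A).Normal := hQH ▸ hHn
    -- all Sylow p-subgroups coincide with Q, hence are normal
    haveI : Finite (Sylow p A) :=
      Finite.of_injective (fun P : Sylow p A => (P : Subgroup A))
        (fun P₁ P₂ h => Sylow.ext h)
    haveI := Sylow.unique_of_normal Q hQn
    rw [Subsingleton.elim P Q]
    exact hQn
  have htfae := (isNilpotent_of_finite_tfae (G := A)).out 3 0
  exact htfae.mp h4
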